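/- arXiv:2103.15045 — 2 statements merged into one kernel-verified Lean document; each statement's English description precedes it below -/
import Mathlib

section
/- For every simple graph G on vertex set [n], the bipartite graph D(G + K_1), where the join G + K_1 is the graph G with one new vertex joined to all vertices of G, is isomorphic to the bipartite graph (D(G))~ obtained by applying the tilde construction to D(G) with respect to its bipartition [n] ⊔ [n̄]. -/
open SimpleGraph Polynomial

namespace PQPaper

instance instFintypeLex {α : Type*} [h : Fintype α] : Fintype (Lex α) := h

/-- The bipartite graph `D(G)` on `V ⊕ V`: edges `{i, ī}` for every vertex `i`,
and `{i, j̄}`, `{ī, j}` for every edge `{i, j}` of `G`. -/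
def DG {V : Type*} (G : SimpleGraph V) : SimpleGraph (V ⊕ V) :=
  SimpleGraph.fromRel fun a b =>
    match a, b with
    | Sum.inl i, Sum.inr j => i = j ∨ G.Adj i j
    | _, _ => False

/-- `f : V → ℕ` is a hypertree of the bipartite graph `H` on `V ⊕ W`
(with hyperedge side `V`): `H` has a spanning tree whose degree at each
left vertex `v` is `f v + 1`. -/
def IsHypertree {V W : Type*} (H : SimpleGraph (V ⊕ W)) (f : V → ℕ) : Prop :=
  ∃ T : SimpleGraph (V ⊕ W), T ≤ H ∧ T.IsTree ∧
    ∀ v : V, (T.neighborSet (Sum.inl v)).ncard = f v + 1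

/-- The set of hypertrees of `H`. -/
def HT {V W : Type*} (H : SimpleGraph (V ⊕ W)) : Set (V → ℕ) :=
  {f | IsHypertree H f}

/-- The set of internally inactive hyperedges of a hypertree `f`. -/
def inactive {V W : Type*} [LT V] (H : SimpleGraph (V ⊕ W)) (f : V → ℕ) : Set V :=
  {j | ∃ j', j' < j ∧ ∃ g : V → ℕ,
    g j' = f j' + 1 ∧ (g j : ℤ) = (f j : ℤ) - 1 ∧
    (∀ i, i ≠ j' → i ≠ j → g i = f i) ∧ IsHypertree H g}

/-- The interior polynomial `I_H(x) = Σ_{f ∈ HT(H)} x^{ῑ(f)}`. -/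
noncomputable def interiorPoly {V W : Type*} [Fintype V] [LinearOrder V]
    (H : SimpleGraph (V ⊕ W)) : Polynomial ℤ :=
  ∑ k ∈ Finset.range (Fintype.card V + 1),
    Polynomial.C ({f | f ∈ HT H ∧ (inactive H f).ncard = k}.ncard : ℤ) * Polynomial.X ^ k

/-- The perfectly matchable sets of a graph: vertex sets of matchings of `H`. -/
def PMSets {V : Type*} (H : SimpleGraph V) : Set (Set V) :=
  {S | ∃ M : H.Subgraph, M.IsMatching ∧ M.verts = S}

/-- The perfectly matchable set polynomial `p(H,x) = Σ_k |PM(H,k)| x^k`. -/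
noncomputable def pmsPoly {V : Type*} [Fintype V] (H : SimpleGraph V) : Polynomial ℤ :=
  ∑ k ∈ Finset.range (Fintype.card V + 1),
    Polynomial.C ({S | S ∈ PMSets H ∧ S.ncard = 2 * k}.ncard : ℤ) * Polynomial.X ^ k

/-- Join of two vertex-disjoint graphs. -/
def sumJoin {V W : Type*} (G : SimpleGraph V) (H : SimpleGraph W) : SimpleGraph (V ⊕ W) where
  Adj a b :=
    match a, b with
    | Sum.inl x, Sum.inl y => G.Adj x y
    | Sum.inr x, Sum.inr y => H.Adj x y
    | Sum.inl _, Sum.inr _ => True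
    | Sum.inr _, Sum.inl _ => True
  symm := by
    constructor
    rintro (x | x) (y | y) h
    · exact G.symm.symm _ _ h
    · exact trivial
    · exact trivial
    · exact H.symm.symm _ _ h
  loopless := by
    constructor
    rintro (x | x) h
    · exact G.loopless.irrefl x h
    · exact H.loopless.irrefl x h

/-- Join of a family of pairwise vertex-disjoint graphs. -/
def sigmaJoin {ι : Type*} {V : ι → Type*} (G : ∀ i, SimpleGraph (V i)) :
    SimpleGraph (Σ i, V i) :=
  SimpleGraph.fromRel fun a b =>
    a.1 ≠ b.1 ∨ ∃ (i : ι) (x y : V i), a = ⟨i, x⟩ ∧ b = ⟨i, y⟩ ∧ (G i).Adj x y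

/-- A copy of a graph on the lexicographic type synonym of its vertex type. -/
def lexify {α : Type*} (G : SimpleGraph α) : SimpleGraph (Lex α) :=
  G.map toLex.toEmbedding

/-- The polynomial
`f_{ℓ,m}(x) = Σ_{k=0}^{ℓ+m−1} Σ_{α=0}^{k} C(ℓ−1,k−α) C(m,α) Σ_{β=α}^{k} C(ℓ+α−1,β) C(m−α,k−β) x^k`. -/
noncomputable def fPoly (l m : ℕ) : Polynomial ℤ :=
  ∑ k ∈ Finset.range (l + m),
    Polynomial.C (∑ a ∈ Finset.range (k + 1),
      ((l - 1).choose (k - a) : ℤ) * (m.choose a : ℤ) *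
        ∑ b ∈ Finset.Icc a k, ((l + a - 1).choose b : ℤ) * ((m - a).choose (k - b) : ℤ)) *
      Polynomial.X ^ k

/-- The cycle graph on `n` vertices. -/
def cycG (n : ℕ) : SimpleGraph (Fin n) :=
  SimpleGraph.fromRel fun a b =>
    (b : ℕ) = (a : ℕ) + 1 ∨ ((a : ℕ) = n - 1 ∧ (b : ℕ) = 0)

/-- `Γ(V')`: the set of neighbours in `D(H)` of the left vertices in `V'`,
viewed as a subset of the right copy `[m̄]`. -/
def Gam {m : ℕ} (H : SimpleGraph (Fin m)) (V' : Set (Fin m)) : Set (Fin m) :=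
  {j | ∃ i ∈ V', (DG H).Adj (Sum.inl i) (Sum.inr j)}

/-- Condition (ii): `Σ_{i ∈ V'} f(i) ≤ |Γ(V')| − 1` for every nonempty `V' ⊆ [m]`. -/
def cond2 {m : ℕ} (H : SimpleGraph (Fin m)) (f : Fin m → ℕ) : Prop :=
  ∀ V' : Finset (Fin m), V'.Nonempty →
    (∑ i ∈ V', f i) + 1 ≤ (Gam H (V' : Set (Fin m))).ncard

/-- `F_H`: functions satisfying conditions (i) and (ii) for `D(H)`. -/
def FSet {m : ℕ} (H : SimpleGraph (Fin m)) : Set (Fin m → ℕ) :=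
  {f | (∑ i, f i) = m - 1 ∧ cond2 H f}

/-- `η_H(f)`: indices `j` admitting `j' < j` such that the transfer of one unit
from `j` to `j'` again satisfies condition (ii). -/
def eta {m : ℕ} (H : SimpleGraph (Fin m)) (f : Fin m → ℕ) : Set (Fin m) :=
  {j | ∃ j', j' < j ∧ ∃ g : Fin m → ℕ,
    g j' = f j' + 1 ∧ (g j : ℤ) = (f j : ℤ) - 1 ∧
    (∀ i, i ≠ j' → i ≠ j → g i = f i) ∧ cond2 H g}

/-- `F_H(k) = {f ∈ F_H : |η_H(f)| = k}`. -/
def FSetK {m : ℕ} (H : SimpleGraph (Fin m)) (k : ℕ) : Set (Fin m → ℕ) :=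
  {f | f ∈ FSet H ∧ (eta H f).ncard = k}

/-- All edges between `{1,…,m1}` and `{m1+1,…,m}` in `Fin m`. -/
def crossGraph (m m1 : ℕ) : SimpleGraph (Fin m) :=
  SimpleGraph.fromRel fun a b => (a : ℕ) < m1 ∧ m1 ≤ (b : ℕ)

/-- The complete graph on the first `m1` vertices of `Fin m`. -/
def leftComplete (m m1 : ℕ) : SimpleGraph (Fin m) :=
  SimpleGraph.fromRel fun a b => (a : ℕ) < m1 ∧ (b : ℕ) < m1

/-- The complete graph on the last `m − m1` vertices of `Fin m`. -/
def rightComplete (m m1 : ℕ) : SimpleGraph (Fin m) :=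
  SimpleGraph.fromRel fun a b => m1 ≤ (a : ℕ) ∧ m1 ≤ (b : ℕ)

/-- The tilde construction: a bipartite graph `H` on `V ⊕ W` together with two
new vertices `u = inr 0` and `w = inr 1`, where `u` is joined to all of `V` and
`w` is joined to all of `W` and to `u`. -/
def tilde {V W : Type*} (H : SimpleGraph (V ⊕ W)) : SimpleGraph ((V ⊕ W) ⊕ Fin 2) :=
  SimpleGraph.fromRel fun a b =>
    (∃ x y, a = Sum.inl x ∧ b = Sum.inl y ∧ H.Adj x y) ∨
    (∃ i : V, a = Sum.inl (Sum.inl i) ∧ b = Sum.inr 0) ∨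
    (∃ j : W, a = Sum.inl (Sum.inr j) ∧ b = Sum.inr 1) ∨
    (a = Sum.inr 0 ∧ b = Sum.inr 1)

/-! In `D(G + K₁)` the new vertex `v` is adjacent to the whole right class and its copy `v̄` to
the whole left class, while `v v̄` is an edge: exactly the roles of `w` and `u` in `D(G)~`. -/

section Adjacency

variable {V W : Type*}

@[simp]
lemma DG_adj_inl_inr (G : SimpleGraph V) (i j : V) :
    (DG G).Adj (Sum.inl i) (Sum.inr j) ↔ i = j ∨ G.Adj i j := by
  simp [DG]

@[simp]
lemma DG_adj_inr_inl (G : SimpleGraph V) (i j : V) :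
    (DG G).Adj (Sum.inr j) (Sum.inl i) ↔ i = j ∨ G.Adj i j := by
  simp [DG]

@[simp]
lemma DG_adj_inl_inl (G : SimpleGraph V) (i j : V) : ¬(DG G).Adj (Sum.inl i) (Sum.inl j) := by
  simp [DG]

@[simp]
lemma DG_adj_inr_inr (G : SimpleGraph V) (i j : V) : ¬(DG G).Adj (Sum.inr i) (Sum.inr j) := by
  simp [DG]

@[simp]
lemma sumJoin_adj_inl_inl (G : SimpleGraph V) (H : SimpleGraph W) (x y : V) :
    (sumJoin G H).Adj (Sum.inl x) (Sum.inl y) ↔ G.Adj x y := Iff.rfl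

@[simp]
lemma sumJoin_adj_inl_inr (G : SimpleGraph V) (H : SimpleGraph W) (x : V) (y : W) :
    (sumJoin G H).Adj (Sum.inl x) (Sum.inr y) := trivial

@[simp]
lemma sumJoin_adj_inr_inl (G : SimpleGraph V) (H : SimpleGraph W) (x : W) (y : V) :
    (sumJoin G H).Adj (Sum.inr x) (Sum.inl y) := trivial

variable (H : SimpleGraph (V ⊕ W))

@[simp]
lemma tilde_adj_inl_inl (x y : V ⊕ W) : (tilde H).Adj (Sum.inl x) (Sum.inl y) ↔ H.Adj x y := by
  rw [tilde, fromRel_adj]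
  constructor
  · rintro ⟨-, h | h⟩ <;> simp_all [adj_comm]
  · exact fun h ↦ ⟨by simpa using h.ne, .inl (.inl ⟨x, y, rfl, rfl, h⟩)⟩

@[simp]
lemma tilde_adj_inl_inl_inr (i : V) (k : Fin 2) :
    (tilde H).Adj (Sum.inl (Sum.inl i)) (Sum.inr k) ↔ k = 0 := by
  simp [tilde]

@[simp]
lemma tilde_adj_inl_inr_inr (j : W) (k : Fin 2) :
    (tilde H).Adj (Sum.inl (Sum.inr j)) (Sum.inr k) ↔ k = 1 := by
  simp [tilde]

@[simp]
lemma tilde_adj_inr_inl_inl (k : Fin 2) (i : V) :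
    (tilde H).Adj (Sum.inr k) (Sum.inl (Sum.inl i)) ↔ k = 0 := by
  rw [adj_comm, tilde_adj_inl_inl_inr]

@[simp]
lemma tilde_adj_inr_inl_inr (k : Fin 2) (j : W) :
    (tilde H).Adj (Sum.inr k) (Sum.inl (Sum.inr j)) ↔ k = 1 := by
  rw [adj_comm, tilde_adj_inl_inr_inr]

@[simp]
lemma tilde_adj_inr_inr (k l : Fin 2) : (tilde H).Adj (Sum.inr k) (Sum.inr l) ↔ k ≠ l := by
  fin_cases k <;> fin_cases l <;> simp [tilde]

end Adjacency

def sumUniqueSumSumUniqueEquiv (V U : Type*) [Unique U] : (V ⊕ U) ⊕ (V ⊕ U) ≃ (V ⊕ V) ⊕ Fin 2 where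
  toFun
    | Sum.inl (Sum.inl i) => Sum.inl (Sum.inl i)
    | Sum.inl (Sum.inr _) => Sum.inr 1
    | Sum.inr (Sum.inl j) => Sum.inl (Sum.inr j)
    | Sum.inr (Sum.inr _) => Sum.inr 0
  invFun
    | Sum.inl (Sum.inl i) => Sum.inl (Sum.inl i)
    | Sum.inl (Sum.inr j) => Sum.inr (Sum.inl j)
    | Sum.inr k => if k = 0 then Sum.inr (Sum.inr default) else Sum.inl (Sum.inr default)
  left_inv := by
    rintro ((i | x) | (j | x)) <;> simp [eq_iff_true_of_subsingleton]
  right_inv := by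
    rintro ((i | j) | k)
    · rfl
    · rfl
    · fin_cases k <;> rfl

def DG.sumJoinTopIsoTilde {V U : Type*} [Unique U] (G : SimpleGraph V) :
    DG (sumJoin G (⊤ : SimpleGraph U)) ≃g tilde (DG G) where
  toEquiv := sumUniqueSumSumUniqueEquiv V U
  map_rel_iff' := by
    rintro ((i | x) | (j | x)) ((i' | x') | (j' | x')) <;>
      simp [sumUniqueSumSumUniqueEquiv, eq_iff_true_of_subsingleton]

/-- For every graph `G` on `[n]`, the bipartite graph `D(G + K₁)` is
isomorphic to the graph obtained from `D(G)` by the tilde construction with respect to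
the bipartition `[n] ⊔ [n̄]`. -/
theorem DG_join_K1_iso_tilde (n : ℕ) (G : SimpleGraph (Fin n)) :
    Nonempty (DG (sumJoin G (⊤ : SimpleGraph (Fin 1))) ≃g tilde (DG G)) := by
  exact ⟨DG.sumJoinTopIsoTilde G⟩

end PQPaper
end

section
/- For every integer m ≥ 2, the polynomial identity f_{2,m}(x) = (x+1)^{m+1} + m((m+1)x + 2) x (x+1)^{m−2} holds; equivalently, f_{2,m}(x) = Σ_{k=0}^{m} C(m, k) (x + 1 + k^2 + k) x^k. -/
open SimpleGraph Polynomial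

/-! For `ℓ = 2` the factor `C(1, k - α)` leaves only `α ∈ {k - 1, k}`, and the inner sums then
have at most two terms, so the coefficient of `x ^ k` in `f_{2,m}` is
`C(m, k - 1) + (1 + k + k²) C(m, k)`: this is the second form. The first follows from it by writing
`k² + k = k (k + 1)` and using the absorption identity `k C(n, k) = n C(n - 1, k - 1)`, which turns
`Σ f(k) k C(n, k) x ^ k` into `n x Σ f(k + 1) C(n - 1, k) x ^ k`, together with
`Σ C(n, k) x ^ k = (x + 1) ^ n`. -/

open Finset

section Binomial

variable {R : Type*} [CommSemiring R]

theorem sum_range_choose_mul_pow (x : R) (n : ℕ) :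
    ∑ k ∈ range (n + 1), (n.choose k : R) * x ^ k = (x + 1) ^ n := by
  rw [add_pow]
  simp only [one_pow, mul_one, mul_comm]

theorem sum_range_mul_natCast_mul_choose_mul_pow (f : ℕ → R) (x : R) (n : ℕ) :
    ∑ k ∈ range (n + 2), f k * k * ((n + 1).choose k : R) * x ^ k =
      (n + 1) * x * ∑ k ∈ range (n + 1), f (k + 1) * (n.choose k : R) * x ^ k := by
  rw [sum_range_succ', mul_sum]
  simp only [Nat.cast_zero, mul_zero, zero_mul, add_zero]
  refine sum_congr rfl fun k _ => ?_
  have absorb :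
      ((k + 1 : ℕ) : R) * ((n + 1).choose (k + 1) : R) = (n + 1) * (n.choose k : R) := by
    rw [← Nat.cast_mul, mul_comm, ← Nat.add_one_mul_choose_eq]
    push_cast
    rfl
  rw [mul_assoc (f _), absorb]
  ring

theorem sum_range_natCast_mul_choose_mul_pow (x : R) (n : ℕ) :
    ∑ k ∈ range (n + 1), (k : R) * (n.choose k : R) * x ^ k = n * x * (x + 1) ^ (n - 1) := by
  rcases n with _ | n
  · simp
  · simpa [sum_range_choose_mul_pow] using
      sum_range_mul_natCast_mul_choose_mul_pow (fun _ => (1 : R)) x n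

theorem sum_range_choose_mul_add_sq_add_mul_pow (x : R) {m : ℕ} (hm : 2 ≤ m) :
    ∑ k ∈ range (m + 1), (m.choose k : R) * (x + (1 + (k : R) ^ 2 + k)) * x ^ k =
      (x + 1) ^ (m + 1) + m * ((m + 1) * x + 2) * x * (x + 1) ^ (m - 2) := by
  obtain ⟨n, rfl⟩ := Nat.exists_eq_add_of_le' hm
  have quadratic_part :
      ∑ k ∈ range (n + 2 + 1), (k + 1 : R) * k * ((n + 2).choose k : R) * x ^ k =
        (n + 2) * x * ((n + 1) * x * (x + 1) ^ n + 2 * (x + 1) ^ (n + 1)) := by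
    have expand :
        ∑ k ∈ range (n + 1 + 1), (((k + 1 : ℕ) : R) + 1) * ((n + 1).choose k : R) * x ^ k =
        ∑ k ∈ range (n + 1 + 1), (k : R) * ((n + 1).choose k : R) * x ^ k +
          2 * ∑ k ∈ range (n + 1 + 1), ((n + 1).choose k : R) * x ^ k := by
      rw [mul_sum, ← sum_add_distrib]
      refine sum_congr rfl fun k _ => ?_
      push_cast
      ring
    rw [sum_range_mul_natCast_mul_choose_mul_pow (fun k => (k + 1 : R)), expand,
      sum_range_natCast_mul_choose_mul_pow, sum_range_choose_mul_pow]
    push_cast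
    ring
  calc ∑ k ∈ range (n + 2 + 1), ((n + 2).choose k : R) * (x + (1 + (k : R) ^ 2 + k)) * x ^ k
      = (x + 1) * ∑ k ∈ range (n + 2 + 1), ((n + 2).choose k : R) * x ^ k +
          ∑ k ∈ range (n + 2 + 1), (k + 1 : R) * k * ((n + 2).choose k : R) * x ^ k := by
        rw [mul_sum, ← sum_add_distrib]
        refine sum_congr rfl fun k _ => ?_
        ring
    _ = _ := by
        rw [sum_range_choose_mul_pow, quadratic_part]
        push_cast
        ring

end Binomial

namespace PQPaper

def fCoeff (l m k : ℕ) : ℤ :=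
  ∑ a ∈ range (k + 1),
    ((l - 1).choose (k - a) : ℤ) * (m.choose a : ℤ) *
      ∑ b ∈ Icc a k, ((l + a - 1).choose b : ℤ) * ((m - a).choose (k - b) : ℤ)

theorem fPoly_eq_sum_fCoeff (l m : ℕ) :
    fPoly l m = ∑ k ∈ range (l + m), C (fCoeff l m k) * X ^ k :=
  rfl

theorem fCoeff_two_zero (m : ℕ) : fCoeff 2 m 0 = 1 := by
  simp [fCoeff]

theorem fCoeff_two_succ (m j : ℕ) :
    fCoeff 2 m (j + 1) = m.choose j + (1 + (j + 1) + (j + 1) ^ 2) * m.choose (j + 1) := by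
  have absorb : (m.choose j : ℤ) * (m - j : ℕ) = m.choose (j + 1) * (j + 1) := by
    exact_mod_cast (Nat.choose_succ_right_eq m j).symm
  rw [fCoeff, sum_range_succ, sum_range_succ, sum_eq_zero fun a ha => by
    rw [Nat.choose_eq_zero_of_lt (by have := mem_range.mp ha; omega), Nat.cast_zero, zero_mul,
      zero_mul]]
  rw [sum_Icc_succ_top (Nat.le_succ j), show 2 + j - 1 = j + 1 by omega,
    show 2 + (j + 1) - 1 = j + 1 + 1 by omega]
  simp only [Nat.add_one_sub_one, add_tsub_cancel_left, Nat.choose_self, Nat.cast_one, one_mul,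
    Icc_self, sum_singleton, Nat.choose_succ_self_right, Nat.cast_add, Nat.choose_one_right,
    tsub_self, Nat.choose_zero_right, mul_one, zero_add]
  linear_combination (j + 1 : ℤ) * absorb

theorem fPoly_two_eq_sum (m : ℕ) :
    fPoly 2 m =
      ∑ k ∈ range (m + 1), C (m.choose k : ℤ) * (X + C (1 + (k : ℤ) ^ 2 + k)) * X ^ k := by
  let g (k : ℕ) : ℤ[X] := C ((1 + k + k ^ 2) * m.choose k : ℤ) * X ^ k
  have hg : g (m + 1) = 0 := by simp [g]
  calc fPoly 2 m
      = ∑ k ∈ range (m + 1), (C (m.choose k : ℤ) * X ^ (k + 1) + g (k + 1)) + g 0 := by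
        rw [fPoly_eq_sum_fCoeff, add_comm 2 m, sum_range_succ']
        congr 1
        · refine sum_congr rfl fun k _ => ?_
          simp only [fCoeff_two_succ, g, map_add, map_mul, map_pow, map_natCast, map_one,
            Nat.cast_succ]
          ring
        · simp [fCoeff_two_zero, g]
    _ = ∑ k ∈ range (m + 1), C (m.choose k : ℤ) * X ^ (k + 1) +
          ∑ k ∈ range (m + 1), g k := by
        rw [sum_add_distrib, add_assoc, ← sum_range_succ', sum_range_succ _ (m + 1), hg, add_zero]
    _ = _ := by
        rw [← sum_add_distrib]
        refine sum_congr rfl fun k _ => ?_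
        simp only [g, map_add, map_mul, map_pow, map_natCast, map_one]
        ring

/-- For every integer `m ≥ 2`,
`f_{2,m}(x) = (x+1)^{m+1} + m((m+1)x + 2) x (x+1)^{m−2}`; equivalently,
`f_{2,m}(x) = Σ_{k=0}^{m} C(m,k) (x + 1 + k² + k) x^k`. -/
theorem fPoly_two (m : ℕ) (hm : 2 ≤ m) :
    fPoly 2 m =
        (Polynomial.X + 1) ^ (m + 1) +
          Polynomial.C (m : ℤ) * (Polynomial.C ((m : ℤ) + 1) * Polynomial.X + 2) *
            Polynomial.X * (Polynomial.X + 1) ^ (m - 2) ∧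
      fPoly 2 m =
        ∑ k ∈ Finset.range (m + 1),
          Polynomial.C (m.choose k : ℤ) *
            (Polynomial.X + Polynomial.C (1 + (k : ℤ) ^ 2 + (k : ℤ))) * Polynomial.X ^ k := by
  refine ⟨(fPoly_two_eq_sum m).trans ?_, fPoly_two_eq_sum m⟩
  simpa only [map_add, map_pow, map_natCast, map_one, map_ofNat] using
    sum_range_choose_mul_add_sq_add_mul_pow (X : ℤ[X]) hm

end PQPaper
end
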